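/- arXiv:2209.05847 — 3 statements merged into one kernel-verified Lean document; each statement's English description precedes it below -/
import Mathlib

section
/- Let k be a field, A a commutative k-algebra, and d ≥ 1 an odd integer. Then the cokernel of the map ∂_d : A^{⊗(d+2)} → A ⊗_k A (the (d+1)-st differential of the higher Hochschild complex of the d-sphere) is isomorphic, as an A-module, to the module of Kähler differentials Ω¹_{A/k}; the isomorphism is induced by the A-linear map A ⊗_k A → Ω¹_{A/k} sending a ⊗ x to a·dx. -/
/-!
Sending `a ⊗ x` to `a • dx` kills the image of `∂_d` for every `d`: by the Leibniz rule each
middle term `(∏_{j ∉ {i-1,i}} x_j) ⊗ x_{i-1}x_i` of `∂_d(a ⊗ x_0 ⊗ ⋯ ⊗ x_d)` maps to the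
difference of consecutive terms `± (a ∏_{j ≠ m} x_j) dx_m`, and the first and last terms cancel
the ends of this telescoping sum. Conversely, for odd `d`, `∂_d(1 ⊗ u ⊗ v ⊗ 1 ⊗ ⋯ ⊗ 1)` is
`u ⊗ v + v ⊗ u - 1 ⊗ uv`, since the signs of the remaining terms `uv ⊗ 1` add up to zero. These
are exactly the Leibniz relations, so the quotient of `A ⊗ A` by them is a presentation of
`Ω¹_{A/k}`.
-/

open TensorProduct

section

variable {k A : Type*} [CommRing k] [CommRing A] [Algebra k A]

theorem Fin.sum_univ_succ_sub_castSucc {M : Type*} [AddCommGroup M] {n : ℕ}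
    (f : Fin (n + 1) → M) :
    ∑ i : Fin n, (f i.succ - f i.castSucc) = f (Fin.last n) - f 0 := by
  rw [Finset.sum_sub_distrib, ← add_sub_cancel_left (f 0) (∑ i : Fin n, f i.succ),
    ← Fin.sum_univ_succ, ← add_sub_cancel_right (∑ i : Fin n, f i.castSucc) (f (Fin.last n)),
    ← Fin.sum_univ_castSucc]
  abel

variable (k) in
/-- `∂_d (a ⊗ x_0 ⊗ ⋯ ⊗ x_d)`; the summand indexed by `i : Fin d` is the paper's `i + 1`. -/
def sphereBoundary (d : ℕ) (a : A) (x : Fin (d + 1) → A) : A ⊗[k] A :=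
  (a * ∏ j ∈ Finset.univ.erase 0, x j) ⊗ₜ[k] x 0 +
    ∑ i : Fin d,
      ((-1 : A) ^ ((i : ℕ) + 1) *
          (a * ∏ j ∈ (Finset.univ.erase i.castSucc).erase i.succ, x j)) ⊗ₜ[k]
        (x i.castSucc * x i.succ) +
    ((-1 : A) ^ (d + 1) * (a * ∏ j ∈ Finset.univ.erase (Fin.last d), x j)) ⊗ₜ[k]
      x (Fin.last d)

variable (k) in
theorem sphereBoundary_one_mulSingle {d : ℕ} (hd : Odd d) (u v : A) :
    sphereBoundary k d 1 (Pi.mulSingle 0 u * Pi.mulSingle 1 v) =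
      u ⊗ₜ v + v ⊗ₜ u - 1 ⊗ₜ (u * v) := by
  simp only [sphereBoundary, Pi.mul_apply, Finset.prod_mul_distrib, Finset.prod_pi_mulSingle']
  obtain rfl | ⟨e, he, rfl⟩ : d = 1 ∨ ∃ e, Odd e ∧ d = e + 2 := by
    obtain ⟨_ | c, rfl⟩ := hd
    · exact .inl rfl
    · exact .inr ⟨2 * c + 1, odd_two_mul_add_one c, by ring⟩
  · rw [show u ⊗ₜ v + v ⊗ₜ u - 1 ⊗ₜ (u * v) = v ⊗ₜ[k] u + (-1 : A) ⊗ₜ (u * v) + u ⊗ₜ v by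
      rw [neg_tmul]; abel]
    simp [Pi.mulSingle_apply]
  · have htail : ∑ i : Fin e, (-1 : A) ^ ((i : ℕ) + 1 + 1 + 1) = -1 := by
      simp only [pow_succ, ← Finset.sum_mul, Fin.sum_univ_eq_sum_range (fun i => (-1 : A) ^ i),
        neg_one_geom_sum, if_neg (Nat.not_even_iff_odd.mpr he)]
      norm_num
    have hlast : (-1 : A) ^ (e + 2 + 1) = 1 := by
      rw [pow_succ, pow_succ, pow_succ, he.neg_one_pow]
      norm_num
    rw [Fin.sum_univ_succ, Fin.sum_univ_succ, show u ⊗ₜ v + v ⊗ₜ u - 1 ⊗ₜ (u * v) =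
        v ⊗ₜ[k] u + ((-1 : A) ⊗ₜ (u * v) + (u ⊗ₜ v + (-(u * v)) ⊗ₜ 1)) + (u * v) ⊗ₜ 1 by
      rw [neg_tmul, neg_tmul]; abel]
    simp [Fin.ext_iff, Fin.val_succ, Nat.mod_eq_of_lt (by omega : 2 < e + 2 + 1), ← sum_tmul,
      ← Finset.sum_mul, htail, hlast]

namespace Derivation

variable {M : Type*} [AddCommGroup M] [Module A M] [Module k M] [IsScalarTower k A M]

theorem tensorProductTo_prod_erase_erase_tmul_mul {ι : Type*} [Fintype ι] [DecidableEq ι]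
    (D : Derivation k A M) (c : A) (x : ι → A) {i j : ι} (hij : i ≠ j) :
    D.tensorProductTo ((c * ∏ m ∈ (Finset.univ.erase i).erase j, x m) ⊗ₜ (x i * x j)) =
      (c * ∏ m ∈ Finset.univ.erase j, x m) • D (x j) +
        (c * ∏ m ∈ Finset.univ.erase i, x m) • D (x i) := by
  rw [tensorProductTo_tmul, leibniz, smul_add, smul_smul, smul_smul,
    ← Finset.mul_prod_erase _ x (Finset.mem_erase.mpr ⟨hij, Finset.mem_univ i⟩),
    ← Finset.mul_prod_erase _ x (Finset.mem_erase.mpr ⟨hij.symm, Finset.mem_univ j⟩),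
    Finset.erase_right_comm]
  ring_nf

theorem tensorProductTo_sphereBoundary (D : Derivation k A M) (d : ℕ) (a : A)
    (x : Fin (d + 1) → A) : D.tensorProductTo (sphereBoundary k d a x) = 0 := by
  set T : Fin (d + 1) → M := fun j =>
    ((-1 : A) ^ (j : ℕ) * a * ∏ m ∈ Finset.univ.erase j, x m) • D (x j)
  have hfirst : (a * ∏ j ∈ Finset.univ.erase 0, x j) • D (x 0) = T 0 := by simp [T]
  have hmiddle (i : Fin d) : D.tensorProductTo (((-1 : A) ^ ((i : ℕ) + 1) *
      (a * ∏ j ∈ (Finset.univ.erase i.castSucc).erase i.succ, x j)) ⊗ₜ[k]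
        (x i.castSucc * x i.succ)) = T i.succ - T i.castSucc := by
    rw [← mul_assoc, tensorProductTo_prod_erase_erase_tmul_mul D _ x Fin.castSucc_lt_succ.ne]
    simp only [T, Fin.val_succ, Fin.val_castSucc, pow_succ, sub_eq_add_neg, ← neg_smul]
    ring_nf
  have hlast : ((-1 : A) ^ (d + 1) * (a * ∏ j ∈ Finset.univ.erase (Fin.last d), x j)) •
      D (x (Fin.last d)) = -T (Fin.last d) := by
    simp only [T, Fin.val_last, ← neg_smul, pow_succ, mul_assoc]
    ring_nf
  simp only [sphereBoundary, map_add, map_sum, hmiddle, Fin.sum_univ_succ_sub_castSucc,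
    tensorProductTo_tmul, hfirst, hlast]
  abel

theorem tensorProductTo_comp_eq_zero_of_tprod_cons {d : ℕ} (D : Derivation k A M)
    (f : PiTensorProduct k (fun _ : Fin (d + 2) => A) →ₗ[k] A ⊗[k] A)
    (hf : ∀ (a : A) (x : Fin (d + 1) → A),
      f (PiTensorProduct.tprod k (Fin.cons a x)) = sphereBoundary k d a x) :
    D.tensorProductTo.restrictScalars k ∘ₗ f = 0 :=
  PiTensorProduct.ext <| MultilinearMap.ext fun y => by
    rw [← Fin.cons_self_tail y]
    exact (congrArg D.tensorProductTo (hf _ _)).trans (tensorProductTo_sphereBoundary D d _ _)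

end Derivation

namespace KaehlerDifferential

variable {N : Submodule A (A ⊗[k] A)}
  (hle : N ≤ LinearMap.ker (D k A).tensorProductTo)
  (hrel : ∀ u v : A, u ⊗ₜ[k] v + v ⊗ₜ[k] u - 1 ⊗ₜ[k] (u * v) ∈ N)

def derivationTensorQuotient : Derivation k A ((A ⊗[k] A) ⧸ N) :=
  Derivation.mk' ((N.mkQ.restrictScalars k) ∘ₗ TensorProduct.mk k A A 1) fun a b => by
    simp only [LinearMap.coe_comp, Function.comp_apply, mk_apply, LinearMap.coe_restrictScalars,
      Submodule.mkQ_apply, ← Submodule.Quotient.mk_smul, ← Submodule.Quotient.mk_add,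
      Submodule.Quotient.eq, ← tmul_eq_smul_one_tmul]
    simpa using N.neg_mem (hrel a b)

theorem derivationTensorQuotient_apply (x : A) :
    derivationTensorQuotient hrel x = Submodule.Quotient.mk ((1 : A) ⊗ₜ[k] x) := rfl

noncomputable def tensorQuotientEquiv : ((A ⊗[k] A) ⧸ N) ≃ₗ[A] Ω[A⁄k] :=
  LinearEquiv.ofLinearMap (N.liftQ _ hle) (derivationTensorQuotient hrel).liftKaehlerDifferential
    (Derivation.liftKaehlerDifferential_unique _ _ <| Derivation.ext fun x => by
      simp [derivationTensorQuotient_apply, Derivation.tensorProductTo_tmul])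
    (by
      ext x
      simp [derivationTensorQuotient_apply, Derivation.tensorProductTo_tmul])

theorem tensorQuotientEquiv_mk (a x : A) :
    tensorQuotientEquiv hle hrel (Submodule.Quotient.mk (a ⊗ₜ[k] x)) = a • D k A x := rfl

end KaehlerDifferential

end

theorem stmt_0_general (k : Type*) [Field k] (A : Type*) [CommRing A] [Algebra k A]
    (d : ℕ) (hodd : Odd d)
    (dd : PiTensorProduct k (fun _ : Fin (d + 2) => A) →ₗ[k] A ⊗[k] A)
    (hdd : ∀ (a : A) (x : Fin (d + 1) → A),
      dd (PiTensorProduct.tprod k (Fin.cons a x)) =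
        (a * ∏ j ∈ Finset.univ.erase 0, x j) ⊗ₜ[k] x 0 +
        ∑ i : Fin d,
          ((-1 : A) ^ ((i : ℕ) + 1) *
              (a * ∏ j ∈ (Finset.univ.erase i.castSucc).erase i.succ, x j)) ⊗ₜ[k]
            (x i.castSucc * x i.succ) +
        ((-1 : A) ^ (d + 1) * (a * ∏ j ∈ Finset.univ.erase (Fin.last d), x j)) ⊗ₜ[k]
          x (Fin.last d)) :
    ∃ e : ((A ⊗[k] A) ⧸ Submodule.span A (Set.range dd)) ≃ₗ[A] KaehlerDifferential k A,
      ∀ (a x : A),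
        e (Submodule.Quotient.mk (a ⊗ₜ[k] x)) = a • KaehlerDifferential.D k A x := by
  have hcomp := (KaehlerDifferential.D k A).tensorProductTo_comp_eq_zero_of_tprod_cons dd hdd
  have hle : Submodule.span A (Set.range dd) ≤
      LinearMap.ker (KaehlerDifferential.D k A).tensorProductTo :=
    Submodule.span_le.mpr <| Set.range_subset_iff.mpr fun t => LinearMap.congr_fun hcomp t
  have hrel (u v : A) : u ⊗ₜ[k] v + v ⊗ₜ[k] u - 1 ⊗ₜ[k] (u * v) ∈
      Submodule.span A (Set.range dd) :=
    Submodule.subset_span ⟨_, (hdd 1 _).trans (sphereBoundary_one_mulSingle k hodd u v)⟩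
  exact ⟨KaehlerDifferential.tensorQuotientEquiv hle hrel,
    KaehlerDifferential.tensorQuotientEquiv_mk hle hrel⟩

/-- Let `k` be a field, `A` a commutative `k`-algebra and `d ≥ 1` odd.
If `dd` is the `(d+1)`-st differential of the higher Hochschild complex of the `d`-sphere
(the unique `k`-linear map `A^{⊗(d+2)} → A ⊗[k] A` satisfying the explicit formula below on
pure tensors), then the cokernel of `dd` is isomorphic as an `A`-module to the module of
Kähler differentials `Ω¹_{A/k}`, via the map induced by `a ⊗ x ↦ a • d x`. -/
theorem stmt_0 (k : Type*) [Field k] (A : Type*) [CommRing A] [Algebra k A]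
    (d : ℕ) (hd : 1 ≤ d) (hodd : Odd d)
    (dd : PiTensorProduct k (fun _ : Fin (d + 2) => A) →ₗ[k] A ⊗[k] A)
    (hdd : ∀ (a : A) (x : Fin (d + 1) → A),
      dd (PiTensorProduct.tprod k (Fin.cons a x)) =
        (a * ∏ j ∈ Finset.univ.erase 0, x j) ⊗ₜ[k] x 0 +
        ∑ i : Fin d,
          ((-1 : A) ^ ((i : ℕ) + 1) *
              (a * ∏ j ∈ (Finset.univ.erase i.castSucc).erase i.succ, x j)) ⊗ₜ[k]
            (x i.castSucc * x i.succ) +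
        ((-1 : A) ^ (d + 1) * (a * ∏ j ∈ Finset.univ.erase (Fin.last d), x j)) ⊗ₜ[k]
          x (Fin.last d)) :
    ∃ e : ((A ⊗[k] A) ⧸ Submodule.span A (Set.range dd)) ≃ₗ[A] KaehlerDifferential k A,
      ∀ (a x : A),
        e (Submodule.Quotient.mk (a ⊗ₜ[k] x)) = a • KaehlerDifferential.D k A x :=
  stmt_0_general k A d hodd dd hdd
end

section
/- Let k be a field, A a commutative k-algebra, and d ≥ 2 an even integer. Let μ : A ⊗_k A → A be the multiplication map. Then the image of the map ∂_d : A^{⊗(d+2)} → A ⊗_k A (the (d+1)-st differential of the higher Hochschild complex of the d-sphere) is contained in ker μ, and the quotient (ker μ)/(im ∂_d) is isomorphic, as an A-module, to the module of Kähler differentials Ω¹_{A/k}; the isomorphism is induced by the map sending the class of Σ aᵢ ⊗ bᵢ ∈ ker μ to Σ aᵢ·dbᵢ. -/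
/-!
Write `I = ker μ`, so that `Ω¹_{A/k} = I / I²` with `a • d b` the class of `a ⊗ b - a b ⊗ 1`.
For `d` even the signs in `∂_d` cancel, so `μ ∘ ∂_d = 0`, and the map `a ⊗ b ↦ a • d b`
kills the image of `∂_d` because its value on `∂_d(a ⊗ x₀ ⊗ ⋯ ⊗ x_d)` telescopes.
Conversely, `I²` is spanned over `A` by the products `(1 ⊗ b - b ⊗ 1)(1 ⊗ c - c ⊗ 1)`, and each
of them is `-∂_d(1 ⊗ b ⊗ c ⊗ 1 ⊗ ⋯ ⊗ 1)`. Hence `I² ⊆ A · im ∂_d ⊆ ker (I → Ω¹) = I²`.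
-/

open TensorProduct

theorem Fin.sum_succ_sub_castSucc {M : Type*} [AddCommGroup M] (n : ℕ) (f : Fin (n + 1) → M) :
    ∑ i : Fin n, (f i.succ - f i.castSucc) = f (Fin.last n) - f 0 := by
  induction n with
  | zero => simp
  | succ n ih =>
    rw [Fin.sum_univ_castSucc]
    simp only [Fin.succ_castSucc]
    rw [ih (fun j => f j.castSucc), Fin.succ_last, Fin.castSucc_zero]
    abel

theorem Fin.sum_neg_one_pow_add_eq_zero {R : Type*} [Ring R] {n : ℕ} (hn : Even n) (m : ℕ) :
    ∑ i : Fin n, (-1 : R) ^ ((i : ℕ) + m) = 0 := by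
  simp_rw [pow_add]
  rw [← Finset.sum_mul, Fin.sum_univ_eq_sum_range (fun i => (-1 : R) ^ i), neg_one_geom_sum,
    if_pos hn, zero_mul]

theorem Fin.prod_erase_castSucc_erase_succ_mul {M : Type*} [CommMonoid M] {d : ℕ}
    (x : Fin (d + 1) → M) (i : Fin d) :
    (∏ j ∈ (Finset.univ.erase i.castSucc).erase i.succ, x j) * (x i.castSucc * x i.succ) =
      ∏ j, x j := by
  rw [mul_comm (x _), ← mul_assoc,
    Finset.prod_erase_mul _ _ (Finset.mem_erase.2 ⟨Fin.castSucc_lt_succ.ne', Finset.mem_univ _⟩),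
    Finset.prod_erase_mul _ _ (Finset.mem_univ _)]

theorem Finset.prod_mulSingle_mul_mulSingle {ι M : Type*} [DecidableEq ι] [CommMonoid M]
    (i i' : ι) (b c : M) (s : Finset ι) :
    ∏ j ∈ s, (Pi.mulSingle i b * Pi.mulSingle i' c : ι → M) j =
      (if i ∈ s then b else 1) * (if i' ∈ s then c else 1) := by
  simp only [Pi.mul_apply, Finset.prod_mul_distrib, Finset.prod_pi_mulSingle']

theorem PiTensorProduct.eq_zero_of_forall_tprod_cons {k A M : Type*} [CommRing k]
    [AddCommGroup A] [Module k A] [AddCommGroup M] [Module k M] {n : ℕ}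
    (f : PiTensorProduct k (fun _ : Fin (n + 1) => A) →ₗ[k] M)
    (hf : ∀ (a : A) (x : Fin n → A), f (PiTensorProduct.tprod k (Fin.cons a x)) = 0)
    (y : PiTensorProduct k (fun _ : Fin (n + 1) => A)) : f y = 0 := by
  suffices f = 0 by rw [this, LinearMap.zero_apply]
  refine PiTensorProduct.ext (MultilinearMap.ext fun v => ?_)
  simpa only [LinearMap.compMultilinearMap_apply, LinearMap.zero_apply, Fin.cons_self_tail]
    using hf (v 0) (Fin.tail v)

theorem LinearMap.apply_eq_lmul' {k A : Type*} [CommRing k] [CommRing A] [Algebra k A]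
    (μ : A ⊗[k] A →ₗ[A] A) (hμ : ∀ a b : A, μ (a ⊗ₜ[k] b) = a * b) (x : A ⊗[k] A) :
    μ x = Algebra.TensorProduct.lmul' k x := by
  induction x using TensorProduct.induction_on with
  | zero => simp only [map_zero]
  | tmul a b => rw [hμ, Algebra.TensorProduct.lmul'_apply_tmul]
  | add u v hu hv => rw [map_add, map_add, hu, hv]

section SphereDifferential

variable {k A : Type*} [CommRing k] [CommRing A] [Algebra k A]

-- `∂_d (a ⊗ x₀ ⊗ ⋯ ⊗ x_d)`
variable (k) in
def sphereDifferential (d : ℕ) (a : A) (x : Fin (d + 1) → A) : A ⊗[k] A :=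
  (a * ∏ j ∈ Finset.univ.erase 0, x j) ⊗ₜ[k] x 0 +
    ∑ i : Fin d,
      ((-1 : A) ^ ((i : ℕ) + 1) *
          (a * ∏ j ∈ (Finset.univ.erase i.castSucc).erase i.succ, x j)) ⊗ₜ[k]
        (x i.castSucc * x i.succ) +
    ((-1 : A) ^ (d + 1) * (a * ∏ j ∈ Finset.univ.erase (Fin.last d), x j)) ⊗ₜ[k]
      x (Fin.last d)

theorem lmul'_sphereDifferential {d : ℕ} (hd : Even d) (a : A) (x : Fin (d + 1) → A) :
    Algebra.TensorProduct.lmul' (S := A) k (sphereDifferential k d a x) = 0 := by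
  have hmid (i : Fin d) : (-1 : A) ^ ((i : ℕ) + 1) *
      (a * ∏ j ∈ (Finset.univ.erase i.castSucc).erase i.succ, x j) * (x i.castSucc * x i.succ) =
      (-1) ^ ((i : ℕ) + 1) * (a * ∏ j, x j) := by
    rw [mul_assoc, mul_assoc, Fin.prod_erase_castSucc_erase_succ_mul]
  simp only [sphereDifferential, map_add, map_sum, Algebra.TensorProduct.lmul'_apply_tmul, hmid,
    ← Finset.sum_mul, Fin.sum_neg_one_pow_add_eq_zero hd, mul_assoc,
    Finset.prod_erase_mul _ _ (Finset.mem_univ _), hd.add_one.neg_one_pow]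
  ring

theorem tensorProductTo_sphereDifferential {d : ℕ} (hd : Even d) (a : A) (x : Fin (d + 1) → A) :
    (KaehlerDifferential.D k A).tensorProductTo (sphereDifferential k d a x) = 0 := by
  set D := KaehlerDifferential.D k A
  let P : Fin (d + 1) → Ω[A⁄k] := fun m => (a * ∏ j ∈ Finset.univ.erase m, x j) • D (x m)
  let F : Fin (d + 1) → Ω[A⁄k] := fun m => (-1 : A) ^ (m : ℕ) • P m
  have hmid (i : Fin d) : D.tensorProductTo (((-1 : A) ^ ((i : ℕ) + 1) *
          (a * ∏ j ∈ (Finset.univ.erase i.castSucc).erase i.succ, x j)) ⊗ₜ[k]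
        (x i.castSucc * x i.succ)) = F i.succ - F i.castSucc := by
    have hne : i.succ ≠ i.castSucc := Fin.castSucc_lt_succ.ne'
    have hsucc : (∏ j ∈ (Finset.univ.erase i.castSucc).erase i.succ, x j) * x i.castSucc =
        ∏ j ∈ Finset.univ.erase i.succ, x j := by
      rw [Finset.erase_right_comm, Finset.prod_erase_mul _ _ (by simp [hne.symm])]
    have hcast : (∏ j ∈ (Finset.univ.erase i.castSucc).erase i.succ, x j) * x i.succ =
        ∏ j ∈ Finset.univ.erase i.castSucc, x j :=
      Finset.prod_erase_mul _ _ (by simp [hne])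
    simp only [F, P, Derivation.tensorProductTo_tmul, D.leibniz, smul_add, smul_smul, mul_assoc,
      hsucc, hcast, Fin.val_succ, Fin.val_castSucc, pow_succ, mul_neg_one, neg_mul, neg_smul]
    abel
  have hlast : (-1 : A) ^ (d + 1) = -1 := hd.add_one.neg_one_pow
  simp only [sphereDifferential, map_add, map_sum, hmid, Fin.sum_succ_sub_castSucc]
  simp only [F, P, Derivation.tensorProductTo_tmul, hlast, hd.neg_one_pow, mul_smul, Fin.val_last,
    Fin.val_zero, pow_zero, one_smul, neg_one_smul]
  abel

theorem sphereDifferential_one_mulSingle_mul_mulSingle {e : ℕ} (he : Even e) (b c : A) :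
    sphereDifferential k (e + 2) 1 (Pi.mulSingle 0 b * Pi.mulSingle 1 c) =
      -(((1 : A) ⊗ₜ[k] b - b ⊗ₜ[k] 1) * ((1 : A) ⊗ₜ[k] c - c ⊗ₜ[k] 1)) := by
  have h2 : 2 % (e + 2 + 1) = 2 := Nat.mod_eq_of_lt (by omega)
  have htail : ∑ i : Fin e, (-1 : A) ^ ((i : ℕ) + 1 + 1 + 1) = 0 :=
    Fin.sum_neg_one_pow_add_eq_zero he 3
  have hlast : (-1 : A) ^ (e + 2 + 1) = -1 := (he.add even_two).add_one.neg_one_pow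
  have hexpand : sphereDifferential k (e + 2) 1 (Pi.mulSingle 0 b * Pi.mulSingle 1 c) =
      c ⊗ₜ[k] b - 1 ⊗ₜ[k] (b * c) + b ⊗ₜ[k] c - (b * c) ⊗ₜ[k] 1 := by
    rw [sphereDifferential, Fin.sum_univ_succ, Fin.sum_univ_succ]
    simp only [Finset.prod_mulSingle_mul_mulSingle]
    simp [Finset.mem_erase, Fin.ext_iff, Fin.val_succ, h2, ← TensorProduct.sum_tmul,
      ← Finset.sum_mul, htail, hlast, sub_eq_add_neg, TensorProduct.neg_tmul, add_assoc]
  rw [hexpand]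
  simp only [Algebra.TensorProduct.tmul_mul_tmul, sub_mul, mul_sub, one_mul, mul_one]
  abel

end SphereDifferential

namespace KaehlerDifferential

variable {k A : Type*} [CommRing k] [CommRing A] [Algebra k A]

theorem ideal_sq_restrictScalars_le {N : Submodule A (A ⊗[k] A)}
    (hN : ∀ b c : A, ((1 : A) ⊗ₜ[k] b - b ⊗ₜ[k] 1) * ((1 : A) ⊗ₜ[k] c - c ⊗ₜ[k] 1) ∈ N) :
    (ideal k A ^ 2).restrictScalars A ≤ N := by
  rw [sq, Submodule.restrictScalars_mul, ← submodule_span_range_eq_ideal, Submodule.span_mul_span,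
    Submodule.span_le]
  rintro _ ⟨_, ⟨b, rfl⟩, _, ⟨c, rfl⟩, rfl⟩
  exact hN b c

theorem exists_quotient_linearEquiv {K N : Submodule A (A ⊗[k] A)}
    (hK : ∀ x, x ∈ K ↔ x ∈ ideal k A) (hsq : (ideal k A ^ 2).restrictScalars A ≤ N)
    (hN : N ≤ LinearMap.ker (D k A).tensorProductTo) :
    ∃ e : (K ⧸ N.comap K.subtype) ≃ₗ[A] Ω[A⁄k],
      ∀ x : K, e (Submodule.Quotient.mk x) = (D k A).tensorProductTo x := by
  let φ := (D k A).tensorProductTo ∘ₗ K.subtype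
  have hφ : Function.Surjective φ := by
    intro ω
    obtain ⟨x, rfl⟩ := (ideal k A).toCotangent_surjective ω
    exact ⟨⟨x, (hK x).2 x.2⟩, D_tensorProductTo x⟩
  have hker : LinearMap.ker φ = N.comap K.subtype := by
    ext ⟨x, hx⟩
    refine ⟨fun hTx => hsq ?_, fun hxN => hN hxN⟩
    have hxI := (hK x).1 hx
    exact (Ideal.toCotangent_eq_zero _ ⟨x, hxI⟩).1 ((D_tensorProductTo ⟨x, hxI⟩).symm.trans hTx)
  exact ⟨(Submodule.quotEquivOfEq _ _ hker.symm).trans (φ.quotKerEquivOfSurjective hφ),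
    fun _ => rfl⟩

end KaehlerDifferential

/-- Let `k` be a field, `A` a commutative `k`-algebra and `d ≥ 2` even.
Let `μ : A ⊗[k] A → A` be the multiplication map (an `A`-linear map for the `A`-module
structure on the first tensor factor) and let `dd` be the `(d+1)`-st differential of the
higher Hochschild complex of the `d`-sphere (the unique `k`-linear map
`A^{⊗(d+2)} → A ⊗[k] A` satisfying the explicit formula below on pure tensors).  Then the
image of `dd` is contained in `ker μ`, and the quotient `(ker μ)/(im dd)` is isomorphic as
an `A`-module to `Ω¹_{A/k}`, via the map induced by `Σ aᵢ ⊗ bᵢ ↦ Σ aᵢ • d bᵢ`. -/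
theorem stmt_1 (k : Type*) [Field k] (A : Type*) [CommRing A] [Algebra k A]
    (d : ℕ) (hd : 2 ≤ d) (heven : Even d)
    (μ : A ⊗[k] A →ₗ[A] A) (hμ : ∀ a b : A, μ (a ⊗ₜ[k] b) = a * b)
    (dd : PiTensorProduct k (fun _ : Fin (d + 2) => A) →ₗ[k] A ⊗[k] A)
    (hdd : ∀ (a : A) (x : Fin (d + 1) → A),
      dd (PiTensorProduct.tprod k (Fin.cons a x)) =
        (a * ∏ j ∈ Finset.univ.erase 0, x j) ⊗ₜ[k] x 0 +
        ∑ i : Fin d,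
          ((-1 : A) ^ ((i : ℕ) + 1) *
              (a * ∏ j ∈ (Finset.univ.erase i.castSucc).erase i.succ, x j)) ⊗ₜ[k]
            (x i.castSucc * x i.succ) +
        ((-1 : A) ^ (d + 1) * (a * ∏ j ∈ Finset.univ.erase (Fin.last d), x j)) ⊗ₜ[k]
          x (Fin.last d)) :
    (∀ v ∈ Set.range dd, μ v = 0) ∧
    ∃ e : (↥(LinearMap.ker μ) ⧸
            (Submodule.span A (Set.range dd)).comap (LinearMap.ker μ).subtype) ≃ₗ[A]
          KaehlerDifferential k A,
      ∀ (n : ℕ) (a b : Fin n → A) (h : (∑ i, a i ⊗ₜ[k] b i) ∈ LinearMap.ker μ),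
        e (Submodule.Quotient.mk ⟨∑ i, a i ⊗ₜ[k] b i, h⟩) =
          ∑ i, a i • KaehlerDifferential.D k A (b i) := by
  replace hdd : ∀ a x, dd (PiTensorProduct.tprod k (Fin.cons a x)) = sphereDifferential k d a x :=
    hdd
  have hμdd (y) : μ (dd y) = 0 :=
    PiTensorProduct.eq_zero_of_forall_tprod_cons (μ.restrictScalars k ∘ₗ dd) (fun a x => by
      simp only [LinearMap.comp_apply, LinearMap.restrictScalars_apply, hdd,
        μ.apply_eq_lmul' hμ, lmul'_sphereDifferential heven]) y
  have hTdd (y) : (KaehlerDifferential.D k A).tensorProductTo (dd y) = 0 :=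
    PiTensorProduct.eq_zero_of_forall_tprod_cons
      ((KaehlerDifferential.D k A).tensorProductTo.restrictScalars k ∘ₗ dd) (fun a x => by
        simp only [LinearMap.comp_apply, LinearMap.restrictScalars_apply, hdd,
          tensorProductTo_sphereDifferential heven]) y
  have hsq : (KaehlerDifferential.ideal k A ^ 2).restrictScalars A ≤
      Submodule.span A (Set.range dd) := by
    refine KaehlerDifferential.ideal_sq_restrictScalars_le fun b c => ?_
    obtain ⟨e, rfl⟩ : ∃ e, d = e + 2 := ⟨d - 2, by omega⟩
    rw [← neg_neg (_ * _), ← sphereDifferential_one_mulSingle_mul_mulSingle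
      ((Nat.even_add.1 heven).2 even_two), ← hdd]
    exact neg_mem (Submodule.subset_span ⟨_, rfl⟩)
  obtain ⟨e, he⟩ := KaehlerDifferential.exists_quotient_linearEquiv
    (K := LinearMap.ker μ)
    (fun x => by rw [LinearMap.mem_ker, μ.apply_eq_lmul' hμ, RingHom.mem_ker]) hsq
    (Submodule.span_le.2 (by rintro _ ⟨y, rfl⟩; exact hTdd y))
  refine ⟨by rintro _ ⟨y, rfl⟩; exact hμdd y, e, fun n a b h => ?_⟩
  simp only [he, map_sum, Derivation.tensorProductTo_tmul]
end

section
/- Let k be a field, A a commutative k-algebra, and s ∈ A such that the canonical localization map A → A_s is not surjective. Let X = S ∪_U S be the scheme obtained by gluing two copies of S = Spec A along the open subscheme U = D(s) via the identity. Then X is not a separated scheme (i.e., the diagonal morphism X → X × X over Spec k is not a closed immersion). -/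
open CategoryTheory CategoryTheory.Limits AlgebraicGeometry

/-! If `X` were separated, the two copies of `S` would meet in a closed subscheme of
`S ×_k S`. A pushout along an open immersion is also a pullback (compare it with the explicit
gluing), so this intersection is `D(s) = Spec A_s`, embedded by the ring map
`A ⊗_k A → A_s`, `a ⊗ b ↦ ab/1`. Being a closed immersion, this map is surjective; as it factors
through the multiplication `A ⊗_k A → A`, so is `A → A_s`. -/

lemma CategoryTheory.CommSq.isPullback_of_isPullback_comp {C : Type*} [Category C]
    {W X Y Z Z' : C} {fst : W ⟶ X} {snd : W ⟶ Y} {f : X ⟶ Z} {g : Y ⟶ Z} (sq : CommSq fst snd f g)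
    {φ : Z ⟶ Z'} {f' : X ⟶ Z'} {g' : Y ⟶ Z'} (h : IsPullback fst snd f' g')
    (hf : f ≫ φ = f') (hg : g ≫ φ = g') : IsPullback fst snd f g := by
  subst hf hg
  exact .of_isLimit' sq <| PullbackCone.IsLimit.mk sq.w
    (fun c ↦ h.lift c.fst c.snd (by rw [c.condition_assoc]))
    (fun c ↦ h.lift_fst _ _ _) (fun c ↦ h.lift_snd _ _ _)
    (fun c u hu₁ hu₂ ↦ h.hom_ext (by simpa using hu₁) (by simpa using hu₂))

lemma CategoryTheory.Limits.pullback.lift_self_eq_comp_diagonal {C : Type*} [Category C]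
    {W X Y : C} (f : W ⟶ X) (g : X ⟶ Y) [HasPullback g g] :
    pullback.lift (f := g) (g := g) f f rfl = f ≫ pullback.diagonal g := by
  apply pullback.hom_ext
  · rw [pullback.lift_fst, Category.assoc, pullback.diagonal_fst, Category.comp_id]
  · rw [pullback.lift_snd, Category.assoc, pullback.diagonal_snd, Category.comp_id]

lemma ULift.bool_eq_of_ne_of_ne {i j k : ULift Bool} (hij : i ≠ j) (hik : i ≠ k) : j = k := by
  revert i j k; decide

namespace AlgebraicGeometry

variable {U S : Scheme} (f : U ⟶ S) [IsOpenImmersion f]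

noncomputable def Scheme.GlueData.doubleAlong : Scheme.GlueData where
  toGlueData := GlueData.ofGlueData'
    { J := ULift Bool
      U _ := S
      V _ _ _ := U
      f _ _ _ := f
      t _ _ _ := 𝟙 U
      t' _ _ _ _ _ hjk := (hjk (ULift.bool_eq_of_ne_of_ne ‹_› ‹_›)).elim
      t_fac _ _ _ _ _ hjk := (hjk (ULift.bool_eq_of_ne_of_ne ‹_› ‹_›)).elim
      t_inv _ _ _ := Category.id_comp _
      cocycle _ _ _ _ _ hjk := (hjk (ULift.bool_eq_of_ne_of_ne ‹_› ‹_›)).elim }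
  f_open i j := by
    dsimp [GlueData.ofGlueData', GlueData'.f']
    split_ifs <;> infer_instance

lemma Scheme.GlueData.isPullback_doubleAlong_ι :
    IsPullback f f ((doubleAlong f).ι (.up false)) ((doubleAlong f).ι (.up true)) := by
  have h := IsPullback.of_isLimit ((doubleAlong f).vPullbackConeIsLimit (.up false) (.up true))
  refine IsPullback.of_iso h (eqToIso (dif_neg (by simp))) (Iso.refl _) (Iso.refl _) (Iso.refl _)
    ?_ ?_ ?_ ?_ <;>
    simp [vPullbackCone, doubleAlong, CategoryTheory.GlueData.ofGlueData', GlueData'.f'] <;> rfl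

variable {f} in
lemma _root_.CategoryTheory.IsPushout.isPullback_of_isOpenImmersion {X : Scheme}
    {i₁ i₂ : S ⟶ X} (h : IsPushout f f i₁ i₂) : IsPullback f f i₁ i₂ := by
  have hglued := Scheme.GlueData.isPullback_doubleAlong_ι f
  exact h.toCommSq.isPullback_of_isPullback_comp hglued (h.inl_desc _ _ hglued.w)
    (h.inr_desc _ _ hglued.w)

lemma _root_.CategoryTheory.IsPullback.isClosedImmersion_lift {W X Y Z T : Scheme}
    {fst : W ⟶ X} {snd : W ⟶ Y} {f : X ⟶ Z} {g : Y ⟶ Z} (h : IsPullback fst snd f g) {p : Z ⟶ T} [IsSeparated p]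
    {f' : X ⟶ T} {g' : Y ⟶ T} (hf : f ≫ p = f') (hg : g ≫ p = g') :
    IsClosedImmersion
      (pullback.lift fst snd (by rw [← hf, ← hg, h.w_assoc]) : W ⟶ pullback f' g') := by
  subst hf hg
  have : pullback.lift fst snd (by rw [h.w_assoc]) =
      h.isoPullback.hom ≫ pullback.mapDesc f g p := by
    apply pullback.hom_ext
    · rw [pullback.lift_fst, Category.assoc, pullback.lift_fst]
      simp
    · rw [pullback.lift_snd, Category.assoc, pullback.lift_snd]
      simp
  rw [this]
  infer_instance

lemma IsClosedImmersion.SpecMap_iff {R S : CommRingCat} {φ : R ⟶ S} :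
    IsClosedImmersion (Spec.map φ) ↔ Function.Surjective φ := by
  refine ⟨fun _ ↦ ?_, IsClosedImmersion.spec_of_surjective φ⟩
  have hΓ := (IsClosedImmersion.isAffine_surjective_of_isAffine (Spec.map φ)).2
  have e := congr(⇑(CommRingCat.Hom.hom $(Scheme.ΓSpecIso_naturality φ)))
  simp only [CommRingCat.hom_comp, RingHom.coe_comp] at e
  refine Function.Surjective.of_comp (g := (Scheme.ΓSpecIso R).hom) ?_
  rw [← e]
  exact (ConcreteCategory.bijective_of_isIso _).2.comp hΓ

end AlgebraicGeometry

/-- Let `k` be a field, `A` a commutative `k`-algebra and `s ∈ A` such that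
the localization map `A → A_s` is not surjective.  Let `X` be the scheme obtained by gluing
two copies of `S = Spec A` along the open subscheme `U = D(s) ≅ Spec A_s` via the identity
(i.e. `X` is a pushout of `S ⟵ Spec A_s ⟶ S`).  Then `X` is not separated over `Spec k`:
the diagonal morphism `X ⟶ X ×_{Spec k} X` is not a closed immersion. -/
theorem stmt_6 (k : Type) [Field k] (A : Type) [CommRing A] [Algebra k A] (s : A)
    (hs : ¬ Function.Surjective (algebraMap A (Localization.Away s)))
    (X : Scheme) (i₁ i₂ : Spec (CommRingCat.of A) ⟶ X)
    (h : IsPushout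
      (Spec.map (CommRingCat.ofHom (algebraMap A (Localization.Away s))))
      (Spec.map (CommRingCat.ofHom (algebraMap A (Localization.Away s))))
      i₁ i₂) :
    ¬ IsClosedImmersion
        (pullback.diagonal
          (h.desc (Spec.map (CommRingCat.ofHom (algebraMap k A)))
            (Spec.map (CommRingCat.ofHom (algebraMap k A))) rfl)) := by
  intro hdiag
  set α := Spec.map (CommRingCat.ofHom (algebraMap k A))
  have : IsSeparated (h.desc α α rfl) := ⟨hdiag⟩
  have hlift := h.isPullback_of_isOpenImmersion.isClosedImmersion_lift
    (h.inl_desc α α rfl) (h.inr_desc α α rfl)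
  rw [pullback.lift_self_eq_comp_diagonal, diagonal_SpecMap, ← Category.assoc, ← Spec.map_comp,
    MorphismProperty.cancel_right_of_respectsIso @IsClosedImmersion] at hlift
  have hsurj := IsClosedImmersion.SpecMap_iff.mp hlift
  exact hs (Function.Surjective.of_comp (g := Algebra.TensorProduct.lmul' k (S := A)) hsurj)
end
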